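/- Let κ ∈ Γ_k^+ with 1 ≤ k < n and κ_1 ≥ ⋯ ≥ κ_n. If additionally σ_k(κ) ≥ c > 0 and all κ_i ≤ K, then (n−k)σ_{k−1}(κ) + κ_1 σ_{k−2}(κ|1) ≥ c' for a constant c' > 0 depending only on n, k, c, K. In particular σ_{k−1}(κ) ≥ C(n,k−1) (σ_k(κ)/C(n,k))^{(k−1)/k} > 0 and σ_{k−2}(κ|1) > 0. -/

import Mathlib

open Finset

noncomputable def esym {n : ℕ} (m : ℕ) (κ : Fin n → ℝ) : ℝ :=
  ∑ s ∈ Finset.powersetCard m (Finset.univ : Finset (Fin n)), ∏ i ∈ s, κ i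

noncomputable def esymRem {n : ℕ} (m : ℕ) (κ : Fin n → ℝ) (i : Fin n) : ℝ :=
  ∑ s ∈ Finset.powersetCard m ((Finset.univ : Finset (Fin n)).erase i), ∏ j ∈ s, κ j

/-
Newton's inequalities `p_j p_{j+2} ≤ p_{j+1}^2` for the means `p_j = σ_j / C(m, j)` of a real
multiset reduce to the case `m = j + 2`: the roots of the derivative of `∏ (X - a)` are real by
Rolle and have the same `p_j`. In that case, inverting the entries turns the inequality into
Cauchy–Schwarz. On `Γ_k^+` Newton gives Maclaurin's `p_k ^ (k - 1) ≤ p_{k-1} ^ k`, the second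
claim. The third holds because removing any entry `x` from `κ ∈ Γ_k^+` leaves a point of
`Γ_{k-1}^+`: if `σ_{k-1}` of the rest were `≤ 0`, lowering `x` would not decrease `σ_k` and
would keep `κ` in `Γ_k^+` up to a point where some `σ_j`, `j < k`, vanishes; there the bound
`p_k ≤ p_1 ^ (k - j) p_j` from Newton fails. The first claim follows with
`c' = (n - k) C(n, k - 1) (c / C(n, k)) ^ ((k - 1) / k)`, since `κ_1 > 0`.
-/

lemma exists_root_below_of_affine_pos {ι : Type*} (J : Finset ι) (b c : ι → ℝ) {x : ℝ}
    (hx : ∀ j ∈ J, 0 < b j + x * c j) (hc : ∃ j ∈ J, 0 < c j) :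
    ∃ a < x, (∀ t ∈ Set.Ioc a x, ∀ j ∈ J, 0 < b j + t * c j) ∧ ∃ j ∈ J, b j + a * c j = 0 := by
  classical
  have hne : (J.filter fun j => 0 < c j).Nonempty := by
    obtain ⟨j, hj, hcj⟩ := hc
    exact ⟨j, mem_filter.2 ⟨hj, hcj⟩⟩
  -- `a` is the largest root among the increasing affine functions.
  obtain ⟨j₀, hj₀, hj₀a⟩ := exists_mem_eq_sup' hne fun j => -b j / c j
  set a := (J.filter fun j => 0 < c j).sup' hne fun j => -b j / c j
  have hroot_le {j} (hj : j ∈ J) (hcj : 0 < c j) : -b j / c j ≤ a :=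
    le_sup' (fun j => -b j / c j) (mem_filter.2 ⟨hj, hcj⟩)
  obtain ⟨hj₀J, hcj₀⟩ := mem_filter.1 hj₀
  have hzero : b j₀ + a * c j₀ = 0 := by
    rw [hj₀a]; field_simp; ring
  refine ⟨a, ?_, fun t ht j hj => ?_, j₀, hj₀J, hzero⟩
  · nlinarith [hx j₀ hj₀J]
  · obtain ⟨hat, htx⟩ := ht
    rcases le_or_gt (c j) 0 with hcj | hcj
    · nlinarith [hx j hj]
    · have := hroot_le hj hcj
      rw [div_le_iff₀ hcj] at this
      nlinarith

namespace Multiset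

section CommSemiring

variable {R : Type*} [CommSemiring R]

@[simp] lemma esymm_zero (s : Multiset R) : s.esymm 0 = 1 := by
  simp [esymm]

lemma esymm_one (s : Multiset R) : s.esymm 1 = s.sum := by
  simp [esymm, powersetCard_one]

lemma esymm_cons_succ (a : R) (s : Multiset R) (j : ℕ) :
    (a ::ₘ s).esymm (j + 1) = s.esymm (j + 1) + a * s.esymm j := by
  simp only [esymm, powersetCard_cons, map_add, sum_add, map_map, Function.comp_def, prod_cons,
    sum_map_mul_left]

lemma esymm_eq_zero_of_card_lt {s : Multiset R} {j : ℕ} (h : card s < j) : s.esymm j = 0 := by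
  simp [esymm, powersetCard_eq_empty _ h]

lemma esymm_card (s : Multiset R) : s.esymm (card s) = s.prod := by
  induction s using Multiset.induction with
  | empty => simp
  | cons a s ih =>
    rw [card_cons, esymm_cons_succ, ih, esymm_eq_zero_of_card_lt (Nat.lt_succ_self _), prod_cons,
      zero_add]

end CommSemiring

lemma two_mul_esymm_two {R : Type*} [CommRing R] (s : Multiset R) :
    2 * s.esymm 2 = s.sum ^ 2 - (s.map (· ^ 2)).sum := by
  induction s using Multiset.induction with
  | empty => simp [esymm_eq_zero_of_card_lt (show card (0 : Multiset R) < 2 by simp)]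
  | cons a s ih =>
    rw [esymm_cons_succ, esymm_one, sum_cons, map_cons, sum_cons]
    linear_combination ih

lemma sq_sum_le_card_mul_sum_sq (s : Multiset ℝ) :
    s.sum ^ 2 ≤ card s * (s.map (· ^ 2)).sum := by
  have h := _root_.sq_sum_le_card_mul_sum_sq (s := s.toEnumFinset) (f := Prod.fst)
  rwa [Finset.sum_eq_multiset_sum, Finset.sum_eq_multiset_sum, ← Function.comp_def (· ^ 2),
    ← map_map, map_toEnumFinset_fst, card_toEnumFinset] at h

lemma prod_mul_esymm_map_inv {K : Type*} [Field K] {s : Multiset K} (hs : (0 : K) ∉ s) {j : ℕ}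
    (hj : j ≤ card s) : s.prod * (s.map (·⁻¹)).esymm j = s.esymm (card s - j) := by
  induction s using Multiset.induction generalizing j with
  | empty => simp_all
  | cons a s ih =>
    have ha : a ≠ 0 := fun h => hs (h ▸ mem_cons_self a s)
    have hs' : (0 : K) ∉ s := fun h => hs (mem_cons_of_mem h)
    rw [card_cons] at hj ⊢
    rcases j with _ | j
    · rw [esymm_zero, mul_one, Nat.sub_zero, ← card_cons, esymm_card]
    have hsplit : (a ::ₘ s).prod * ((a ::ₘ s).map (·⁻¹)).esymm (j + 1)
        = a * (s.prod * (s.map (·⁻¹)).esymm (j + 1)) + s.prod * (s.map (·⁻¹)).esymm j := by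
      rw [map_cons, esymm_cons_succ, prod_cons]
      field_simp
    rw [hsplit]
    rcases (Nat.lt_or_ge j (card s)) with hlt | hge
    · rw [ih hs' hlt, ih hs' hlt.le, show card s + 1 - (j + 1) = card s - (j + 1) + 1 by omega,
        esymm_cons_succ, show card s - (j + 1) + 1 = card s - j by omega, add_comm]
    · obtain rfl : j = card s := by omega
      rw [esymm_eq_zero_of_card_lt (by simp), mul_zero, mul_zero, zero_add, ih hs' le_rfl,
        Nat.sub_self, Nat.sub_self, esymm_zero, esymm_zero]

noncomputable def esymmAvg (s : Multiset ℝ) (j : ℕ) : ℝ :=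
  s.esymm j / (card s).choose j

@[simp] lemma esymmAvg_zero (s : Multiset ℝ) : esymmAvg s 0 = 1 := by
  simp [esymmAvg]

lemma esymmAvg_two_le_sq (s : Multiset ℝ) : esymmAvg s 2 ≤ esymmAvg s 1 ^ 2 := by
  rcases Nat.lt_or_ge (card s) 2 with hlt | hge
  · rw [esymmAvg, esymm_eq_zero_of_card_lt hlt, zero_div]
    positivity
  have hm : (2 : ℝ) ≤ card s := by exact_mod_cast hge
  have hcs := sq_sum_le_card_mul_sum_sq s
  have h2 := two_mul_esymm_two s
  rw [esymmAvg, esymmAvg, esymm_one, Nat.cast_choose_two, Nat.choose_one_right, div_pow,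
    div_le_div_iff₀ (by nlinarith) (by positivity)]
  nlinarith

lemma esymmAvg_card_sub {s : Multiset ℝ} (hs : (0 : ℝ) ∉ s) {j : ℕ} (hj : j ≤ card s) :
    esymmAvg s (card s - j) = s.prod * esymmAvg (s.map (·⁻¹)) j := by
  rw [esymmAvg, esymmAvg, card_map, Nat.choose_symm hj, ← prod_mul_esymm_map_inv hs hj,
    mul_div_assoc]

lemma esymmAvg_mul_le_sq_of_card_eq {s : Multiset ℝ} {j : ℕ} (hs : card s = j + 2) :
    esymmAvg s j * esymmAvg s (j + 2) ≤ esymmAvg s (j + 1) ^ 2 := by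
  by_cases h0 : (0 : ℝ) ∈ s
  · have hprod : esymmAvg s (j + 2) = 0 := by
      rw [← hs, esymmAvg, esymm_card, prod_eq_zero h0, zero_div]
    rw [hprod, mul_zero]
    positivity
  have h0' := esymmAvg_card_sub h0 (j := 2) (by omega)
  have h1' := esymmAvg_card_sub h0 (j := 1) (by omega)
  have h2' := esymmAvg_card_sub h0 (j := 0) (by omega)
  rw [show card s - 2 = j by omega] at h0'
  rw [show card s - 1 = j + 1 by omega] at h1'
  rw [show card s - 0 = j + 2 by omega, esymmAvg_zero, mul_one] at h2'
  rw [h0', h1', h2', mul_pow, ← mul_rotate, ← sq]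
  exact mul_le_mul_of_nonneg_left (esymmAvg_two_le_sq _) (sq_nonneg _)

open Polynomial in
lemma exists_card_eq_mul_esymm_eq (s : Multiset ℝ) {m : ℕ} (hs : card s = m + 1) :
    ∃ y : Multiset ℝ, card y = m ∧
      ∀ j ≤ m, (m + 1 : ℝ) * y.esymm j = (m + 1 - j : ℕ) * s.esymm j := by
  set f : ℝ[X] := (s.map fun a => X - C a).prod
  have hf_deg : f.natDegree = m + 1 := hs ▸ natDegree_multiset_prod_X_sub_C_eq_card s
  have hf_roots : f.roots = s := roots_multiset_prod_X_sub_C s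
  have hf_lead : f.leadingCoeff = 1 := (monic_multiset_prod_of_monic _ _ fun a _ => monic_X_sub_C a)
  have hf_card : card f.roots = m + 1 := by rw [hf_roots, hs]
  -- Rolle: the derivative of a polynomial with all its roots real again has all its roots real.
  have hg_card : card (derivative f).roots = m := by
    have := card_roots_le_derivative f
    have := card_roots' (derivative f)
    have := natDegree_derivative_le f
    omega
  have hg_deg : (derivative f).natDegree = m := by
    have := card_roots' (derivative f)
    have := natDegree_derivative_le f
    omega
  have hg_coeff (i : ℕ) : (derivative f).coeff i = f.coeff (i + 1) * (i + 1 : ℕ) := by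
    rw [coeff_derivative]; push_cast; rfl
  have hg_lead : (derivative f).leadingCoeff = m + 1 := by
    rw [leadingCoeff, hg_deg, hg_coeff, ← hf_deg, coeff_natDegree, hf_lead, hf_deg]
    push_cast; ring
  refine ⟨(derivative f).roots, hg_card, fun j hj => ?_⟩
  have hvieta_f := coeff_eq_esymm_roots_of_card (p := f) (by rw [hf_roots, hf_deg, hs])
    (k := m + 1 - j) (by omega)
  have hvieta_g := coeff_eq_esymm_roots_of_card (p := derivative f) (by rw [hg_card, hg_deg])
    (k := m - j) (by omega)
  rw [hg_coeff, show m - j + 1 = m + 1 - j by omega, hvieta_f, hf_lead, hg_lead, hf_roots, hf_deg,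
    hg_deg, show m + 1 - (m + 1 - j) = j by omega, show m - (m - j) = j by omega] at hvieta_g
  have hsign : ((-1 : ℝ) ^ j) ^ 2 = 1 := by rw [← pow_mul, mul_comm, pow_mul]; norm_num
  linear_combination -(-1 : ℝ) ^ j * hvieta_g
    - ((m + 1 : ℝ) * (derivative f).roots.esymm j - (m + 1 - j : ℕ) * s.esymm j) * hsign

lemma exists_card_eq_esymmAvg_eq (s : Multiset ℝ) {m : ℕ} (hs : card s = m + 1) :
    ∃ y : Multiset ℝ, card y = m ∧ ∀ j ≤ m, esymmAvg y j = esymmAvg s j := by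
  obtain ⟨y, hy, hys⟩ := exists_card_eq_mul_esymm_eq s hs
  refine ⟨y, hy, fun j hj => ?_⟩
  have hchoose : (m.choose j * (m + 1) : ℝ) = (m + 1).choose j * (m + 1 - j : ℕ) := by
    exact_mod_cast Nat.choose_mul_succ_eq m j
  have h1 : (0 : ℝ) < m.choose j := by exact_mod_cast Nat.choose_pos hj
  have h2 : (0 : ℝ) < (m + 1).choose j := by exact_mod_cast Nat.choose_pos (by omega)
  rw [esymmAvg, esymmAvg, hy, hs, div_eq_div_iff h1.ne' h2.ne']
  apply mul_left_cancel₀ (by positivity : (m + 1 : ℝ) ≠ 0)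
  linear_combination (m + 1).choose j * hys j hj - s.esymm j * hchoose

theorem esymmAvg_mul_le_sq (s : Multiset ℝ) {j : ℕ} (hj : j + 2 ≤ card s) :
    esymmAvg s j * esymmAvg s (j + 2) ≤ esymmAvg s (j + 1) ^ 2 := by
  induction hd : card s - (j + 2) generalizing s with
  | zero => exact esymmAvg_mul_le_sq_of_card_eq (by omega)
  | succ d ih =>
    obtain ⟨y, hy, hys⟩ := exists_card_eq_esymmAvg_eq s (m := card s - 1) (by omega)
    rw [← hys j (by omega), ← hys (j + 1) (by omega), ← hys (j + 2) (by omega)]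
    exact ih y (by omega) (by omega)

lemma esymmAvg_succ_le_mul {s : Multiset ℝ} {j : ℕ} (hj : j + 1 ≤ card s)
    (hpos : ∀ i ≤ j, 0 < esymmAvg s i) : esymmAvg s (j + 1) ≤ esymmAvg s 1 * esymmAvg s j := by
  induction j with
  | zero => simp
  | succ j ih =>
    have hnewton := esymmAvg_mul_le_sq s (j := j) hj
    have ih := ih (by omega) fun i hi => hpos i (by omega)
    have hj0 := hpos j (by omega)
    have hj1 := hpos (j + 1) le_rfl
    refine le_of_mul_le_mul_left ?_ hj0
    nlinarith

lemma esymmAvg_add_le_pow_mul {s : Multiset ℝ} {j i : ℕ} (h : j + i ≤ card s)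
    (hpos : ∀ l ≤ j + i, 0 < esymmAvg s l) :
    esymmAvg s (j + i) ≤ esymmAvg s 1 ^ i * esymmAvg s j := by
  induction i with
  | zero => simp
  | succ i ih =>
    have ih := ih (by omega) fun l hl => hpos l (by omega)
    have h1 := hpos 1 (by omega)
    calc esymmAvg s (j + (i + 1))
        ≤ esymmAvg s 1 * esymmAvg s (j + i) :=
          esymmAvg_succ_le_mul (j := j + i) h fun l hl => hpos l (by omega)
      _ ≤ esymmAvg s 1 * (esymmAvg s 1 ^ i * esymmAvg s j) := by gcongr
      _ = esymmAvg s 1 ^ (i + 1) * esymmAvg s j := by ring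

lemma esymmAvg_succ_pow_le {s : Multiset ℝ} {j : ℕ} (hj : j + 1 ≤ card s)
    (hpos : ∀ i ≤ j + 1, 0 < esymmAvg s i) :
    esymmAvg s (j + 1) ^ j ≤ esymmAvg s j ^ (j + 1) := by
  induction j with
  | zero => simp
  | succ j ih =>
    set p := esymmAvg s
    have ih := ih (by omega) fun i hi => hpos i (by omega)
    have hnewton := esymmAvg_mul_le_sq s (j := j) hj
    have hp0 := hpos j (by omega)
    have hp1 := hpos (j + 1) (by omega)
    have hp2 := hpos (j + 2) le_rfl
    refine le_of_mul_le_mul_left ?_ (pow_pos hp0 (j + 1))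
    calc p j ^ (j + 1) * p (j + 2) ^ (j + 1)
        = (p j * p (j + 2)) ^ (j + 1) := (mul_pow _ _ _).symm
      _ ≤ (p (j + 1) ^ 2) ^ (j + 1) := by gcongr
      _ = p (j + 1) ^ j * p (j + 1) ^ (j + 2) := by ring
      _ ≤ p j ^ (j + 1) * p (j + 1) ^ (j + 2) := by gcongr

lemma esymmAvg_succ_rpow_le {s : Multiset ℝ} {j : ℕ} (hj : j + 1 ≤ card s)
    (hpos : ∀ i ≤ j + 1, 0 < esymmAvg s i) :
    esymmAvg s (j + 1) ^ ((j : ℝ) / (j + 1)) ≤ esymmAvg s j := by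
  have h0 := hpos j (by omega)
  have h1 := hpos (j + 1) le_rfl
  calc esymmAvg s (j + 1) ^ ((j : ℝ) / (j + 1))
      = (esymmAvg s (j + 1) ^ j) ^ ((j + 1 : ℕ) : ℝ)⁻¹ := by
        rw [← Real.rpow_natCast, ← Real.rpow_mul h1.le, div_eq_mul_inv]; push_cast; rfl
    _ ≤ (esymmAvg s j ^ (j + 1)) ^ ((j + 1 : ℕ) : ℝ)⁻¹ := by
        gcongr; exact esymmAvg_succ_pow_le hj hpos
    _ = esymmAvg s j := Real.pow_rpow_inv_natCast h0.le (by omega)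

lemma continuous_esymmAvg_cons (s : Multiset ℝ) (j : ℕ) :
    Continuous fun t : ℝ => esymmAvg (t ::ₘ s) j := by
  rcases j with _ | j
  · simp only [esymmAvg_zero]; fun_prop
  · simp only [esymmAvg, card_cons, esymm_cons_succ]; fun_prop

def InGardingCone (k : ℕ) (s : Multiset ℝ) : Prop :=
  ∀ j, 1 ≤ j → j ≤ k → 0 < s.esymm j

lemma InGardingCone.le_card {k : ℕ} {s : Multiset ℝ} (h : InGardingCone k s) (hk : 1 ≤ k) :
    k ≤ card s := by
  by_contra hlt
  exact (h k hk le_rfl).ne' (esymm_eq_zero_of_card_lt (by omega))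

lemma InGardingCone.esymmAvg_pos {k : ℕ} {s : Multiset ℝ} (h : InGardingCone k s) {j : ℕ}
    (hj : j ≤ k) : 0 < esymmAvg s j := by
  rcases j with _ | j
  · simp
  · exact div_pos (h _ (by omega) hj)
      (by exact_mod_cast Nat.choose_pos (hj.trans (h.le_card (by omega))))

lemma InGardingCone.mono {k l : ℕ} {s : Multiset ℝ} (h : InGardingCone k s) (hlk : l ≤ k) :
    InGardingCone l s :=
  fun j hj1 hjl => h j hj1 (hjl.trans hlk)

lemma esymmAvg_cons_le_pow_mul_of_forall_mem_Ioc {s : Multiset ℝ} {a x : ℝ} (hax : a < x)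
    {j k : ℕ} (hjk : j ≤ k) (hcone : ∀ t ∈ Set.Ioc a x, InGardingCone k (t ::ₘ s)) :
    esymmAvg (a ::ₘ s) k ≤ esymmAvg (a ::ₘ s) 1 ^ (k - j) * esymmAvg (a ::ₘ s) j := by
  have hcard : k ≤ card s + 1 := by
    rcases k.eq_zero_or_pos with rfl | hk
    · omega
    · simpa using (hcone x ⟨hax, le_rfl⟩).le_card hk
  have hclosed : IsClosed {t | esymmAvg (t ::ₘ s) k ≤
      esymmAvg (t ::ₘ s) 1 ^ (k - j) * esymmAvg (t ::ₘ s) j} :=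
    isClosed_le (continuous_esymmAvg_cons s k)
      (((continuous_esymmAvg_cons s 1).pow _).mul (continuous_esymmAvg_cons s j))
  refine hclosed.closure_subset_iff.2 (fun t ht => ?_)
    (by rw [closure_Ioc hax.ne]; exact Set.left_mem_Icc.2 hax.le)
  have := esymmAvg_add_le_pow_mul (s := t ::ₘ s) (j := j) (i := k - j) (by simp; omega)
    fun l hl => (hcone t ht).esymmAvg_pos (by omega)
  rwa [Nat.add_sub_cancel' hjk] at this

theorem InGardingCone.esymm_pos_of_cons {x : ℝ} {s : Multiset ℝ} {j : ℕ}
    (h : InGardingCone (j + 1) (x ::ₘ s)) : 0 < s.esymm j := by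
  rcases j with _ | j
  · simp
  by_contra! hneg
  set k := j + 2
  have hcard : k ≤ card s + 1 := by simpa using h.le_card (by omega)
  have hcons (t : ℝ) (l : ℕ) (hl : 1 ≤ l) :
      (t ::ₘ s).esymm l = s.esymm l + t * s.esymm (l - 1) := by
    obtain ⟨l, rfl⟩ : ∃ l', l = l' + 1 := ⟨l - 1, by omega⟩
    rw [esymm_cons_succ, Nat.add_sub_cancel]
  -- Lower `x` to the first `a` at which some `σ_{j₀}`, `j₀ ≤ k`, vanishes.
  obtain ⟨a, hax, hpos, j₀, hj₀, hzero⟩ := exists_root_below_of_affine_pos (Finset.Icc 1 k)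
    (fun l => s.esymm l) (fun l => s.esymm (l - 1)) (x := x)
    (fun l hl => by
      obtain ⟨hl1, hlk⟩ := Finset.mem_Icc.1 hl
      simpa [hcons x l hl1] using h l hl1 hlk)
    ⟨1, by simp; omega, by simp⟩
  obtain ⟨hj₀1, hj₀k⟩ := Finset.mem_Icc.1 hj₀
  have ha := esymmAvg_cons_le_pow_mul_of_forall_mem_Ioc hax hj₀k fun t ht l hl1 hlk => by
    rw [hcons t l hl1]; exact hpos t ht l (Finset.mem_Icc.2 ⟨hl1, hlk⟩)
  have hj₀zero : esymmAvg (a ::ₘ s) j₀ = 0 := by simp [esymmAvg, hcons a j₀ hj₀1, hzero]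
  -- Since `σ_{k-1}(s) ≤ 0`, lowering `x` to `a` did not decrease `σ_k`.
  have hkpos : 0 < esymmAvg (a ::ₘ s) k := by
    have hx := h k (by omega) le_rfl
    rw [hcons x k (by omega)] at hx
    rw [esymmAvg, hcons a k (by omega), card_cons]
    rw [show k - 1 = j + 1 from rfl] at hx ⊢
    exact div_pos (by nlinarith) (by exact_mod_cast Nat.choose_pos hcard)
  rw [hj₀zero, mul_zero] at ha
  linarith

end Multiset

lemma esym_eq_esymm {n : ℕ} (m : ℕ) (κ : Fin n → ℝ) : esym m κ = (univ.val.map κ).esymm m :=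
  (esymm_map_val κ univ m).symm

lemma esymRem_eq_esymm {n : ℕ} (m : ℕ) (κ : Fin n → ℝ) (i : Fin n) :
    esymRem m κ i = ((univ.erase i).val.map κ).esymm m :=
  (esymm_map_val κ _ m).symm

lemma map_univ_val_eq_cons {n : ℕ} (κ : Fin n → ℝ) (i : Fin n) :
    univ.val.map κ = κ i ::ₘ (univ.erase i).val.map κ := by
  rw [erase_val, ← Multiset.map_cons, Multiset.cons_erase (mem_univ_val i)]

lemma esymRem_pos {n j : ℕ} {κ : Fin n → ℝ} (h : Multiset.InGardingCone (j + 1) (univ.val.map κ))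
    (i : Fin n) : 0 < esymRem j κ i := by
  rw [esymRem_eq_esymm]
  rw [map_univ_val_eq_cons κ i] at h
  exact h.esymm_pos_of_cons

lemma choose_mul_rpow_le_esym {n j : ℕ} {κ : Fin n → ℝ}
    (h : Multiset.InGardingCone (j + 1) (univ.val.map κ)) :
    n.choose j * (esym (j + 1) κ / n.choose (j + 1)) ^ ((j : ℝ) / (j + 1)) ≤ esym j κ := by
  have hcard : j + 1 ≤ n := by simpa using h.le_card (by omega)
  have hC : (0 : ℝ) < n.choose j := by exact_mod_cast Nat.choose_pos (by omega)
  have := Multiset.esymmAvg_succ_rpow_le (h.le_card (by omega)) fun i hi => h.esymmAvg_pos hi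
  rwa [Multiset.esymmAvg, Multiset.esymmAvg, Multiset.card_map, card_val, card_univ,
    Fintype.card_fin, ← esym_eq_esymm, ← esym_eq_esymm, le_div_iff₀ hC, mul_comm] at this

/-- Coefficient estimate in the gradient-decay lemma: for κ ∈ Γ_k^+ (1 ≤ k < n),
    ordered decreasingly, with σ_k ≥ c > 0 and κ_i ≤ K, the quantity
    (n−k)σ_{k−1} + κ_1 σ_{k−2}(κ|1) is bounded below by a positive constant c'
    depending only on n, k, c, K; moreover σ_{k−1} ≥ C(n,k−1)(σ_k/C(n,k))^{(k−1)/k}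
    and σ_{k−2}(κ|1) > 0. -/
theorem stmt_19 {n : ℕ} (k : ℕ) (hk : 1 ≤ k) (hkn : k < n) (c K : ℝ) (hc : 0 < c) :
    ∃ c' > 0, ∀ κ : Fin n → ℝ,
      (∀ j, 1 ≤ j → j ≤ k → 0 < esym j κ) →
      (∀ i j : Fin n, i ≤ j → κ j ≤ κ i) →
      c ≤ esym k κ → (∀ i, κ i ≤ K) →
      c' ≤ ((n : ℝ) - k) * esym (k - 1) κ
            + κ ⟨0, by omega⟩ * esymRem (k - 2) κ ⟨0, by omega⟩ ∧
      (n.choose (k - 1) : ℝ) * (esym k κ / (n.choose k : ℝ)) ^ (((k : ℝ) - 1) / k)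
          ≤ esym (k - 1) κ ∧
      0 < esymRem (k - 2) κ ⟨0, by omega⟩ := by
  obtain ⟨j, rfl⟩ : ∃ j, k = j + 1 := ⟨k - 1, by omega⟩
  have hCj : (0 : ℝ) < n.choose j := by exact_mod_cast Nat.choose_pos (by omega)
  have hCk : (0 : ℝ) < n.choose (j + 1) := by exact_mod_cast Nat.choose_pos hkn.le
  have hnk : (0 : ℝ) < n - ↑(j + 1) := sub_pos.2 (by exact_mod_cast hkn)
  refine ⟨(n - ↑(j + 1)) * (n.choose j * (c / n.choose (j + 1)) ^ ((j : ℝ) / (j + 1))),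
    by positivity, fun κ hΓ hord hck _ => ?_⟩
  rw [Nat.add_sub_cancel, show j + 1 - 2 = j - 1 by omega,
    show ((↑(j + 1) : ℝ) - 1) / ↑(j + 1) = (j : ℝ) / (j + 1) by push_cast; ring]
  set i₀ : Fin n := ⟨0, by omega⟩
  have hcone : Multiset.InGardingCone (j + 1) (univ.val.map κ) := fun l hl1 hl => by
    rw [← esym_eq_esymm]; exact hΓ l hl1 hl
  have hmac := choose_mul_rpow_le_esym hcone
  have hrem := esymRem_pos (hcone.mono (by omega : j - 1 + 1 ≤ j + 1)) i₀
  have hmax : 0 < κ i₀ := by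
    have hsum : ∑ _i : Fin n, (0 : ℝ) < ∑ i, κ i := by
      rw [sum_const_zero, sum_eq_multiset_sum, ← Multiset.esymm_one, ← esym_eq_esymm]
      exact hΓ 1 le_rfl hk
    obtain ⟨i, -, hi⟩ := exists_lt_of_sum_lt hsum
    exact hi.trans_le (hord i₀ i (Nat.zero_le _))
  refine ⟨?_, hmac, hrem⟩
  calc _ ≤ (n - ↑(j + 1)) * esym j κ := by
        gcongr
        exact hmac.trans' (by gcongr)
    _ ≤ _ := le_add_of_nonneg_right (mul_pos hmax hrem).le
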